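/- Let (S, ⊗, 1) be a monoid. For a finger B-tree where the total aggregate of the window equals Π_←(leftFinger) ⊗ Π_|(root) ⊗ Π_→(rightFinger): if the root y has children c₀,...,c_{a-1} and values v₀,...,v_{a-2}, the left finger's left aggregate Π_← includes everything on the left spine and its descendants, the root's inner aggregate is v₀ ⊗ up(c₁) ⊗ ... ⊗ up(c_{a-2}) ⊗ v_{a-2}, and the right finger's right aggregate includes everything on the right spine and descendants, then the combination Π_←(leftFinger) ⊗ Π_|(root) ⊗ Π_→(rightFinger) equals the ordered product of all values stored in the tree. -/
import Mathlib


/-- FiBA trees over a value type S: a leaf holds a list of values; an internal node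
holds a leftmost child c₀ followed by alternating values and children
v₀, c₁, v₁, c₂, …, v_{a-2}, c_{a-1}. -/
inductive ATree (S : Type*) : Type _
  | leaf : List S → ATree S
  | node : ATree S → List (S × ATree S) → ATree S

namespace ATree

variable {S : Type*}

/- In-order list of all values stored in the tree. -/
mutual
  def toList : ATree S → List S
    | .leaf vs => vs
    | .node c rest => toList c ++ toListAux rest
  def toListAux : List (S × ATree S) → List S
    | [] => []
    | (v, c) :: rest => v :: (toList c ++ toListAux rest)
end

variable [Monoid S]

/- Up aggregate Π↑(y) = Π↑(c₀) ⊗ v₀ ⊗ … ⊗ v_{a-2} ⊗ Π↑(c_{a-1}):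
the in-order product of all values of the subtree. -/
mutual
  def upAgg : ATree S → S
    | .leaf vs => vs.prod
    | .node c rest => upAgg c * upAggAux rest
  def upAggAux : List (S × ATree S) → S
    | [] => 1
    | (v, c) :: rest => v * upAgg c * upAggAux rest
end

/-- Inner aggregate of a node with children c₀,…,c_{a-1} and values v₀,…,v_{a-2}:
Π_|(y) = v₀ ⊗ Π↑(c₁) ⊗ … ⊗ Π↑(c_{a-2}) ⊗ v_{a-2}, i.e. it excludes the
leftmost and rightmost children. -/
def innerAux : List (S × ATree S) → S
  | [] => 1
  | [(v, _)] => v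
  | (v, c) :: rest => v * upAgg c * innerAux rest

/-- Left aggregate computed down the left spine:
Π_←(y) = Π_|(y) ⊗ Π↑(c_{a-1}) ⊗ (1 if the parent is the root, else Π_←(parent)),
so descending to the leftmost child threads the accumulator
Π_|(y) ⊗ Π↑(c_{a-1}) ⊗ acc = upAggAux rest ⊗ acc; at the left finger (a leaf) the
result combines the leaf's own values with the accumulator. -/
def leftAggFrom (acc : S) : ATree S → S
  | .leaf vs => vs.prod * acc
  | .node c rest => leftAggFrom (upAggAux rest * acc) c

/- Right aggregate computed down the right spine:
Π_→(y) = (1 if the parent is the root, else Π_→(parent)) ⊗ Π↑(c₀) ⊗ Π_|(y),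
descending into the rightmost child. -/
mutual
  def rightAggFrom (acc : S) : ATree S → S
    | .leaf vs => acc * vs.prod
    | .node c rest => rightAggAux (acc * upAgg c) rest
  def rightAggAux (acc : S) : List (S × ATree S) → S
    | [] => acc
    | [(v, c)] => rightAggFrom (acc * v) c
    | (v, c) :: rest => rightAggAux (acc * v * upAgg c) rest
end

end ATree

namespace ATree

variable {S : Type*} [Monoid S]

mutual
  theorem upAgg_eq : ∀ t : ATree S, upAgg t = (toList t).prod
    | .leaf vs => rfl
    | .node c rest => by
      rw [upAgg, toList, List.prod_append, upAgg_eq c, upAggAux_eq rest]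
  theorem upAggAux_eq : ∀ l : List (S × ATree S), upAggAux l = (toListAux l).prod
    | [] => rfl
    | (v, c) :: rest => by
      rw [upAggAux, toListAux, List.prod_cons, List.prod_append,
        upAgg_eq c, upAggAux_eq rest, mul_assoc]
end

theorem leftAggFrom_eq : ∀ (t : ATree S) (acc : S), leftAggFrom acc t = upAgg t * acc
  | .leaf vs, acc => rfl
  | .node c rest, acc => by
    rw [leftAggFrom, leftAggFrom_eq c, upAgg, mul_assoc]

mutual
  theorem rightAggFrom_eq : ∀ (t : ATree S) (acc : S), rightAggFrom acc t = acc * upAgg t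
    | .leaf vs, acc => rfl
    | .node c rest, acc => by
      rw [rightAggFrom, rightAggAux_eq rest, upAgg, mul_assoc]
  theorem rightAggAux_eq : ∀ (l : List (S × ATree S)) (acc : S),
      rightAggAux acc l = acc * upAggAux l
    | [], acc => by rw [rightAggAux, upAggAux, mul_one]
    | [(v, c)], acc => by
      rw [rightAggAux, rightAggFrom_eq c, upAggAux, upAggAux, mul_one, mul_assoc]
    | (v, c) :: (p :: rest), acc => by
      rw [rightAggAux, rightAggAux_eq (p :: rest)]
      · simp [upAggAux, mul_assoc]
      · simp
end

theorem inner_last : ∀ (l : List (S × ATree S)) (hne : l ≠ []),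
    innerAux l * upAgg (l.getLast hne).2 = upAggAux l
  | [(v, c)], _ => by rw [innerAux, List.getLast_singleton, upAggAux, upAggAux, mul_one]
  | (v, c) :: (p :: rest), _ => by
    rw [innerAux, upAggAux, List.getLast_cons (List.cons_ne_nil p rest)]
    · rw [mul_assoc, mul_assoc, inner_last (p :: rest) (List.cons_ne_nil p rest), mul_assoc]
    · simp

end ATree

/-- For a FiBA tree whose root has children c₀,…,c_{a-1} and values v₀,…,v_{a-2}
(a ≥ 2): the left finger's left aggregate (covering the left spine and its
descendants, computed from c₀), combined with the root's inner aggregate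
v₀ ⊗ Π↑(c₁) ⊗ … ⊗ Π↑(c_{a-2}) ⊗ v_{a-2}, combined with the right finger's right
aggregate (covering the right spine and its descendants, computed from c_{a-1}),
equals the ordered product of all values stored in the tree. -/
theorem fiba_query_correct {S : Type*} [Monoid S]
    (c₀ : ATree S) (rest : List (S × ATree S)) (hne : rest ≠ []) :
    ATree.leftAggFrom 1 c₀ * ATree.innerAux rest *
        ATree.rightAggFrom 1 (rest.getLast hne).2 =
      (ATree.toList (ATree.node c₀ rest)).prod := by
  rw [ATree.leftAggFrom_eq, ATree.rightAggFrom_eq, mul_one, one_mul, mul_assoc,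
    ATree.inner_last rest hne, ATree.toList, List.prod_append,
    ATree.upAgg_eq, ATree.upAggAux_eq]
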